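/- Let G be a group, (g₁,…,gₙ) ∈ Gⁿ, c = g₁⋯gₙ, and let σᵢ be the Hurwitz moves. Then the full twist (σ_{n−1}σ_{n−2}⋯σ₁)ⁿ applied to (g₁,…,gₙ) equals (c g₁ c⁻¹, c g₂ c⁻¹, …, c gₙ c⁻¹). -/

import Mathlib

/-- The Hurwitz move `σᵢ`. -/
def hurwitzMove {G : Type*} [Group G] (i : ℕ) (g : ℕ → G) : ℕ → G :=
  fun j => if j = i then g i * g (i + 1) * (g i)⁻¹ else if j = i + 1 then g i else g j

/-- The cycling move `σ_{n−1} σ_{n−2} ⋯ σ₁` (here 0-indexed: `σ_{n-2} ∘ ⋯ ∘ σ₀`,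
with `σ₀` applied first). -/
def cyclingMove {G : Type*} [Group G] (n : ℕ) : (ℕ → G) → (ℕ → G) :=
  (List.range (n - 1)).foldl (fun f i => hurwitzMove i ∘ f) id

/-!
On the first `n` entries the cycling move `σ_{n−1} ⋯ σ₁` rotates the tuple one step to the left
and conjugates by its first entry: `(g₁, …, gₙ) ↦ g₁ (g₂, …, gₙ, g₁) g₁⁻¹`. By induction, `k`
cycling moves rotate by `k` steps and conjugate by the product of the first `k` entries of the
periodically extended tuple. For `k = n` the rotation is trivial and that product is `c`.
-/

section FullTwist

variable {G : Type*} [Group G]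

lemma foldl_hurwitzMove_range_apply (m : ℕ) (g : ℕ → G) (j : ℕ) :
    (List.range m).foldl (fun f i => hurwitzMove i ∘ f) id g j =
      if j < m then g 0 * g (j + 1) * (g 0)⁻¹ else if j = m then g 0 else g j := by
  induction m generalizing j with
  | zero => split_ifs <;> simp_all
  | succ m ih =>
    simp only [List.range_succ, List.foldl_append, List.foldl_cons, List.foldl_nil,
      Function.comp_apply, hurwitzMove, ih]
    split_ifs <;> first | (subst_vars; rfl) | omega

lemma cyclingMove_apply_of_lt {n j : ℕ} (g : ℕ → G) (hj : j < n) :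
    cyclingMove n g j = g 0 * g ((j + 1) % n) * (g 0)⁻¹ := by
  rw [cyclingMove, foldl_hurwitzMove_range_apply]
  by_cases hlast : j + 1 = n
  · rw [if_neg (by omega), if_pos (by omega), hlast, Nat.mod_self]
    group
  · rw [if_pos (by omega), Nat.mod_eq_of_lt (by omega)]

lemma iterate_cyclingMove_apply_of_lt {n j : ℕ} (g : ℕ → G) (k : ℕ) (hj : j < n) :
    (cyclingMove n)^[k] g j =
      ((List.range k).map (fun i => g (i % n))).prod * g ((j + k) % n) *
        ((List.range k).map (fun i => g (i % n))).prod⁻¹ := by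
  induction k generalizing j with
  | zero => simp [Nat.mod_eq_of_lt hj]
  | succ k ih =>
    have hn : 0 < n := by omega
    rw [Function.iterate_succ_apply', cyclingMove_apply_of_lt _ hj, ih hn,
      ih (Nat.mod_lt _ hn), List.prod_range_succ, Nat.mod_add_mod, Nat.zero_add,
      show j + 1 + k = j + (k + 1) by omega]
    group

end FullTwist

/-- The full twist `(σ_{n−1} ⋯ σ₁)ⁿ` conjugates every entry of the tuple by the
product `c = g₁ ⋯ gₙ`. -/
theorem fullTwist_eq_conj {G : Type*} [Group G] (n : ℕ) (g : ℕ → G)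
    (c : G) (hc : c = ((List.range n).map g).prod) :
    ∀ j < n, ((cyclingMove n)^[n] g) j = c * g j * c⁻¹ := by
  intro j hj
  have hprod : ((List.range n).map (fun i => g (i % n))).prod = c := by
    rw [hc]
    congr 1
    exact List.map_congr_left fun i hi => by rw [Nat.mod_eq_of_lt (List.mem_range.mp hi)]
  rw [iterate_cyclingMove_apply_of_lt g n hj, hprod, Nat.add_mod_right, Nat.mod_eq_of_lt hj]
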